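/- arXiv:2604.00967 — 7 statements merged into one kernel-verified Lean document; each statement's English description precedes it below -/
import Mathlib

section
/- In any DS_n-frame satisfying D3 (R_{⊗_i} ⊆ R_□) and D5 (for every w there exists v with R_{⊗_i} w v such that every R_{[i]}-successor of v is an R_{⊗_i}-successor of w), the formula ⊗_i φ → ◇[i]φ (Ought implies Ability) is valid: if φ holds at every R_{⊗_i}-successor of w, then there exists an R_□-successor v of w such that φ holds at every R_{[i]}-successor of v. -/
/-- A DS_n-frame: W nonempty, R_□ an equivalence relation, each R_{[i]} an
equivalence sub-relation of R_□, independence of agents (C3), and D1. -/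
structure DSFrame (Ag W : Type) where
  nonempty : Nonempty W
  RBox : W → W → Prop
  RCh : Ag → W → W → Prop
  ROb : Ag → W → W → Prop
  box_equiv : Equivalence RBox
  ch_sub : ∀ i w v, RCh i w v → RBox w v
  ch_equiv : ∀ i, Equivalence (RCh i)
  indep : ∀ (w : W) (u : Ag → W), (∀ i, RBox w (u i)) → ∃ z, ∀ i, RCh i (u i) z
  d1 : ∀ i w v u, RBox w v → ROb i w u → ROb i v u

theorem OiA {Ag W : Type} (F : DSFrame Ag W) (i : Ag)
    (D3 : ∀ w v, F.ROb i w v → F.RBox w v)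
    (D5 : ∀ w, ∃ v, F.ROb i w v ∧ ∀ u, F.RCh i v u → F.ROb i w u)
    (φ : W → Prop) (w : W)
    (h : ∀ u, F.ROb i w u → φ u) :
    ∃ v, F.RBox w v ∧ ∀ u, F.RCh i v u → φ u := by
  obtain ⟨v, hwv, hchoice⟩ := D5 w
  exact ⟨v, D3 w v hwv, fun u hvu => h u (hchoice u hvu)⟩
end

section
/- In any DS_n-frame, the formula ⊗_i^d φ → ◇[i]¬[i]φ (Ought implies Refrainability) is valid, where ⊗_i^d φ abbreviates ⊗_i φ ∧ ◇¬φ. That is, if all R_{⊗_i}-successors of w satisfy φ and some R_□-successor of w falsifies φ, then there exists an R_□-successor v of w such that every R_{[i]}-successor u of v has some R_{[i]}-successor falsifying φ. -/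
/-- The Brouwer axiom `p → □◇p`, valid on symmetric frames. -/
theorem Std.Symm.exists_rel_and_of_rel {α : Type*} {R : α → α → Prop} (hR : Std.Symm R)
    {p : α → Prop} {v : α} (hv : p v) : ∀ u, R v u → ∃ t, R u t ∧ p t :=
  fun _ hvu => ⟨v, hR.symm _ _ hvu, hv⟩

theorem OiR {Ag W : Type} (F : DSFrame Ag W) (i : Ag) (φ : W → Prop) (w : W)
    (h : (∀ u, F.ROb i w u → φ u) ∧ (∃ v, F.RBox w v ∧ ¬ φ v)) :
    ∃ v, F.RBox w v ∧ ∀ u, F.RCh i v u → ∃ t, F.RCh i u t ∧ ¬ φ t := by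
  obtain ⟨-, v, hwv, hv⟩ := h
  exact ⟨v, hwv, (F.ch_equiv i).stdSymm.exists_rel_and_of_rel hv⟩
end

section
/- In any DS_n-frame satisfying D3 and D5, the formula ⊗_i^d φ → (◇[i]φ ∧ ◇φ ∧ ◇¬φ) (Ought implies Ability and Opportunity) is valid, where ⊗_i^d φ abbreviates ⊗_i φ ∧ ◇¬φ. -/
theorem OiAO {Ag W : Type} (F : DSFrame Ag W) (i : Ag)
    (D3 : ∀ w v, F.ROb i w v → F.RBox w v)
    (D5 : ∀ w, ∃ v, F.ROb i w v ∧ ∀ u, F.RCh i v u → F.ROb i w u)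
    (φ : W → Prop) (w : W)
    (h : (∀ u, F.ROb i w u → φ u) ∧ (∃ v, F.RBox w v ∧ ¬ φ v)) :
    (∃ v, F.RBox w v ∧ ∀ u, F.RCh i v u → φ u) ∧
    (∃ v, F.RBox w v ∧ φ v) ∧ (∃ v, F.RBox w v ∧ ¬ φ v) := by
  obtain ⟨hOught, hAvoidable⟩ := h
  obtain ⟨v, hwv, hIdeal⟩ := D5 w
  have hPossible : F.RBox w v := D3 w v hwv
  exact ⟨⟨v, hPossible, fun u hvu => hOught u (hIdeal u hvu)⟩, ⟨v, hPossible, hOught v hwv⟩,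
    hAvoidable⟩
end

section
/- In any DS_n-frame satisfying D3 and D5, the formula ⊗_i^c φ → (◇[i]φ ∧ ◇[i]¬φ) (Ought implies Control) is valid, where ⊗_i^c φ abbreviates ⊗_i φ ∧ ◇[i]¬φ. -/
theorem DSFrame.exists_choice_cell_subset_ideal {Ag W : Type} (F : DSFrame Ag W) {i : Ag}
    (D3 : ∀ w v, F.ROb i w v → F.RBox w v)
    (D5 : ∀ w, ∃ v, F.ROb i w v ∧ ∀ u, F.RCh i v u → F.ROb i w u) (w : W) :
    ∃ v, F.RBox w v ∧ ∀ u, F.RCh i v u → F.ROb i w u := by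
  obtain ⟨v, hwv, hv⟩ := D5 w
  exact ⟨v, D3 w v hwv, hv⟩

theorem OiCtrl {Ag W : Type} (F : DSFrame Ag W) (i : Ag)
    (D3 : ∀ w v, F.ROb i w v → F.RBox w v)
    (D5 : ∀ w, ∃ v, F.ROb i w v ∧ ∀ u, F.RCh i v u → F.ROb i w u)
    (φ : W → Prop) (w : W)
    (h : (∀ u, F.ROb i w u → φ u) ∧
         (∃ v, F.RBox w v ∧ ∀ u, F.RCh i v u → ¬ φ u)) :
    (∃ v, F.RBox w v ∧ ∀ u, F.RCh i v u → φ u) ∧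
    (∃ v, F.RBox w v ∧ ∀ u, F.RCh i v u → ¬ φ u) := by
  obtain ⟨v, hwv, hv⟩ := F.exists_choice_cell_subset_ideal D3 D5 w
  exact ⟨⟨v, hwv, fun u hu => h.1 u (hv u hu)⟩, h.2⟩
end

section
/- In any DS_n-frame satisfying D3 (R_{⊗_i} ⊆ R_□) and D4 (R_{⊗_i};R_{[i]} ⊆ R_{⊗_i}), the 'normative OiA' formula ⊗_i(⊗_i φ → ◇[i]φ) is valid: for every R_{⊗_i}-successor y of w, if φ holds at all R_{⊗_i}-successors of y, then there is an R_□-successor z of y such that φ holds at all R_{[i]}-successors of z. -/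
namespace DSFrame

/-- D4 makes `t` ideal for `w`, and D1 carries this to `y` along `R_□ w y` (from D3). -/
theorem ROb_of_ROb_of_RCh {Ag W : Type} (F : DSFrame Ag W) {i : Ag}
    (D3 : ∀ w v, F.ROb i w v → F.RBox w v)
    (D4 : ∀ w v u, F.ROb i w v → F.RCh i v u → F.ROb i w u)
    {w y t : W} (hwy : F.ROb i w y) (hyt : F.RCh i y t) : F.ROb i y t :=
  F.d1 i w y t (D3 w y hwy) (D4 w y t hwy hyt)

end DSFrame

theorem NOiA {Ag W : Type} (F : DSFrame Ag W) (i : Ag)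
    (D3 : ∀ w v, F.ROb i w v → F.RBox w v)
    (D4 : ∀ w v u, F.ROb i w v → F.RCh i v u → F.ROb i w u)
    (φ : W → Prop) (w : W) :
    ∀ y, F.ROb i w y → ((∀ u, F.ROb i y u → φ u) →
      ∃ z, F.RBox y z ∧ ∀ t, F.RCh i z t → φ t) := by
  intro y hwy hφ
  exact ⟨y, F.box_equiv.refl y, fun t hyt => hφ t (F.ROb_of_ROb_of_RCh D3 D4 hwy hyt)⟩
end

section
/- In any DS_n-frame satisfying D5 (for every w there exists v with R_{⊗_i} w v such that all R_{[i]}-successors of v are R_{⊗_i}-successors of w), the formula ⊗_i φ → ⊖_i ◇[i]φ is valid, where ⊖_i is the existential dual of ⊗_i: if φ holds at all R_{⊗_i}-successors of w, then there exists an R_{⊗_i}-successor v of w such that some R_□-successor u of v has φ true at all its R_{[i]}-successors. -/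
theorem ought_implies_permitted_ability {Ag W : Type} (F : DSFrame Ag W) (i : Ag)
    (D5 : ∀ w, ∃ v, F.ROb i w v ∧ ∀ u, F.RCh i v u → F.ROb i w u)
    (φ : W → Prop) (w : W)
    (h : ∀ u, F.ROb i w u → φ u) :
    ∃ v, F.ROb i w v ∧ ∃ u, F.RBox v u ∧ ∀ t, F.RCh i u t → φ t := by
  obtain ⟨v, hwv, hv⟩ := D5 w
  exact ⟨v, hwv, v, F.box_equiv.refl v, fun t hvt => h t (hv t hvt)⟩
end

section
/- There exists a DS_1-frame (single agent) satisfying D2 (seriality of R_{⊗_1}) together with a valuation and a world at which ⊗_1 p → ⊗_1 ◇[1]p fails; hence OiNA is not valid over the class of DS_1-frames with D2. Concretely: take W = {w, v, u, z}, R_{[1]} the equivalence relation with classes {w},{u},{v,z}, R_□ the equivalence relation with classes {w},{u},{v,z}, R_{⊗_1} = {(w,u),(w,v),(u,u),(v,v),(z,v)}, and V(p) = {w, v, u}; then w satisfies ⊗_1 p but not ⊗_1 ◇[1]p. -/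
namespace DSFrame

variable {W : Type}

/-- With a single agent, independence of agents holds by reflexivity of `R_{[1]}`. -/
def ofSingleAgent [Nonempty W] (RBox RCh ROb : W → W → Prop) (box_equiv : Equivalence RBox)
    (ch_equiv : Equivalence RCh) (ch_sub : ∀ w v, RCh w v → RBox w v)
    (d1 : ∀ w v u, RBox w v → ROb w u → ROb v u) : DSFrame Unit W where
  nonempty := ‹_›
  RBox := RBox
  RCh := fun _ => RCh
  ROb := fun _ => ROb
  box_equiv := box_equiv
  ch_sub := fun _ => ch_sub
  ch_equiv := fun _ => ch_equiv
  indep := fun _ u _ => ⟨u (), fun _ => ch_equiv.refl _⟩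
  d1 := fun _ => d1

end DSFrame

def oiNAClass : Fin 4 → Fin 3 := ![0, 1, 2, 1]

def oiNABox (a b : Fin 4) : Prop := oiNAClass a = oiNAClass b

theorem oiNABox_equivalence : Equivalence oiNABox :=
  ⟨fun _ => rfl, Eq.symm, Eq.trans⟩

def oiNAOb (a b : Fin 4) : Prop := (a, b) ∈ ({(0, 2), (0, 1), (2, 2), (1, 1), (3, 1)} : Finset _)

instance (a b : Fin 4) : Decidable (oiNABox a b) := inferInstanceAs (Decidable (_ = _))

instance (a b : Fin 4) : Decidable (oiNAOb a b) := inferInstanceAs (Decidable (_ ∈ _))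

theorem oiNAOb_d1 : ∀ w v u, oiNABox w v → oiNAOb w u → oiNAOb v u := by decide

theorem oiNAOb_serial : ∀ x, ∃ y, oiNAOb x y := by decide

theorem oiNAOb_zero_ne_three : ∀ u, oiNAOb 0 u → u ≠ 3 := by decide

def oiNAFrame : DSFrame Unit (Fin 4) :=
  .ofSingleAgent oiNABox oiNABox oiNAOb oiNABox_equivalence oiNABox_equivalence
    (fun _ _ => id) oiNAOb_d1

/-- There is a single-agent DS-frame satisfying D2, a valuation and a world
at which ⊗₁ p → ⊗₁ ◇[1]p fails (OiNA is not valid over DS₁-frames with D2). -/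
theorem OiNA_not_valid_with_D2 :
    ∃ (F : DSFrame Unit (Fin 4)) (V : Fin 4 → Prop) (w : Fin 4),
      (∀ x, ∃ y, F.ROb () x y) ∧
      (∀ u, F.ROb () w u → V u) ∧
      ¬ (∀ v, F.ROb () w v → ∃ u, F.RBox v u ∧ ∀ t, F.RCh () u t → V t) := by
  refine ⟨oiNAFrame, fun x => x ≠ 3, 0, oiNAOb_serial, oiNAOb_zero_ne_three,
    fun h => ?_⟩
  obtain ⟨u, hvu, hu⟩ := h 1 (by decide : oiNAOb 0 1)
  have huz : oiNABox u 3 := oiNABox_equivalence.trans (oiNABox_equivalence.symm hvu) rfl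
  exact hu 3 huz rfl
end
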